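/- arXiv:2602.17554 — 2 statements merged into one kernel-verified Lean document; each statement's English description precedes it below -/
import Mathlib

section
/- The JSD gap lower bound: let Π be a set of probability distributions on a finite set X, let ε_k = inf_{π ∈ Π} D_KL(p_k ‖ π) be the best-in-class error for source p_k, and let π_λ ∈ Π be any element of Π (in particular the minimizer of D_KL(p_λ ‖ ·) over Π). Then D_KL(p_λ ‖ π_λ) ≥ ∑_k λ_k ε_k − JSD^λ(p_1,...,p_n), where p_λ = ∑_k λ_k p_k and JSD^λ = ∑_k λ_k D_KL(p_k ‖ p_λ). -/
/-!
Because `p_λ = ∑ λ_k p_k`, splitting `log (p_k / π) = log (p_k / p_λ) + log (p_λ / π)` yields the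
compensation identity `∑ λ_k D(p_k ‖ π) = JSD^λ + D(p_λ ‖ π)` for every `π` positive on the
supports. Gibbs' inequality bounds the divergences below by `0`, so `ε_k ≤ D(p_k ‖ π_λ)`, and the
bound follows by averaging these inequalities with weights `λ_k`.
-/

open Finset

/-- Kullback-Leibler divergence on a finite type, with convention 0·log 0 = 0. -/
noncomputable def KL {X : Type*} [Fintype X] (p q : X → ℝ) : ℝ :=
  ∑ x, p x * Real.log (p x / q x)

/-- `p` is a probability mass function on a finite type. -/
def IsPMF {X : Type*} [Fintype X] (p : X → ℝ) : Prop :=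
  (∀ x, 0 ≤ p x) ∧ ∑ x, p x = 1

section

variable {X : Type*} [Fintype X]

lemma sub_le_mul_log_div {a b : ℝ} (ha : 0 ≤ a) (hb : 0 ≤ b) (hab : 0 < a → 0 < b) :
    a - b ≤ a * Real.log (a / b) := by
  rcases ha.eq_or_lt with rfl | ha
  · simpa using hb
  have hb := hab ha
  have h := mul_le_mul_of_nonneg_left (Real.one_sub_inv_le_log_of_pos (div_pos ha hb)) ha.le
  rwa [inv_div, mul_sub, mul_one, mul_div_cancel₀ _ ha.ne'] at h

theorem KL_nonneg {p q : X → ℝ} (hp : IsPMF p) (hq : IsPMF q) (hpq : ∀ x, 0 < p x → 0 < q x) :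
    0 ≤ KL p q :=
  calc (0 : ℝ) = ∑ x, (p x - q x) := by rw [sum_sub_distrib, hp.2, hq.2, sub_self]
    _ ≤ KL p q := sum_le_sum fun x _ => sub_le_mul_log_div (hp.1 x) (hq.1 x) (hpq x)

theorem sInf_KL_image_le {p : X → ℝ} (hp : IsPMF p) {Fam : Set (X → ℝ)}
    (hFam : ∀ π ∈ Fam, IsPMF π ∧ ∀ x, 0 < p x → 0 < π x) {σ : X → ℝ} (hσ : σ ∈ Fam) :
    sInf ((fun π => KL p π) '' Fam) ≤ KL p σ := by
  refine csInf_le ⟨0, ?_⟩ ⟨σ, hσ, rfl⟩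
  rintro _ ⟨τ, hτ, rfl⟩
  exact KL_nonneg hp (hFam τ hτ).1 (hFam τ hτ).2

lemma mul_log_div_eq_add {a b c : ℝ} (hb : b ≠ 0) (hc : c ≠ 0) :
    a * Real.log (a / c) = a * Real.log (a / b) + a * Real.log (b / c) := by
  rcases eq_or_ne a 0 with rfl | ha
  · simp
  rw [← mul_add, ← Real.log_mul (div_ne_zero ha hb) (div_ne_zero hb hc), div_mul_div_cancel₀ hb]

theorem sum_mul_KL_eq_sum_mul_KL_mixture_add_KL {ι : Type*} [Fintype ι] (p : ι → X → ℝ)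
    (hp : ∀ k x, 0 ≤ p k x) (l : ι → ℝ) (hl : ∀ k, 0 ≤ l k) (q : X → ℝ)
    (hq : ∀ x, (∃ k, 0 < p k x) → 0 < q x) :
    ∑ k, l k * KL (p k) q
      = ∑ k, l k * KL (p k) (fun x => ∑ j, l j * p j x) + KL (fun x => ∑ k, l k * p k x) q := by
  set m : X → ℝ := fun x => ∑ j, l j * p j x
  have split (k : ι) (x : X) : l k * (p k x * Real.log (p k x / q x))
      = l k * (p k x * Real.log (p k x / m x)) + l k * p k x * Real.log (m x / q x) := by
    rcases (mul_nonneg (hl k) (hp k x)).eq_or_lt with hw | hw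
    · rw [mul_comm (l k) (p k x)] at hw
      rcases mul_eq_zero.mp hw.symm with h | h <;> simp [h]
    have hpx : 0 < p k x := pos_of_mul_pos_right hw (hl k)
    have hmx : 0 < m x := hw.trans_le <|
      single_le_sum (f := fun j => l j * p j x) (fun j _ => mul_nonneg (hl j) (hp j x)) (mem_univ k)
    rw [mul_log_div_eq_add hmx.ne' (hq x ⟨k, hpx⟩).ne']
    ring
  simp only [KL, mul_sum, sum_congr rfl fun k _ => sum_congr rfl fun x _ => split k x,
    sum_add_distrib]
  rw [sum_comm (f := fun k x => l k * p k x * Real.log (m x / q x))]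
  simp only [← sum_mul]
  rfl

end

theorem jsd_gap_lower_bound_general
    {X : Type*} [Fintype X] {n : ℕ}
    (p : Fin n → X → ℝ) (hp : ∀ k, IsPMF (p k))
    (l : Fin n → ℝ) (hl : ∀ k, 0 ≤ l k)
    (Fam : Set (X → ℝ))
    (hFam : ∀ π ∈ Fam, IsPMF π ∧ ∀ x, (∃ k, 0 < p k x) → 0 < π x)
    (ε : Fin n → ℝ) (hε : ∀ k, ε k = sInf ((fun π => KL (p k) π) '' Fam))
    (πl : X → ℝ) (hπl : πl ∈ Fam) :
    ∑ k, l k * ε k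
        - ∑ k, l k * KL (p k) (fun x => ∑ j, l j * p j x)
      ≤ KL (fun x => ∑ k, l k * p k x) πl := by
  have hε_le (k : Fin n) : ε k ≤ KL (p k) πl :=
    hε k ▸ sInf_KL_image_le (hp k)
      (fun π hπ => ⟨(hFam π hπ).1, fun x hx => (hFam π hπ).2 x ⟨k, hx⟩⟩) hπl
  have hcomp :=
    sum_mul_KL_eq_sum_mul_KL_mixture_add_KL p (fun k => (hp k).1) l hl πl (hFam πl hπl).2
  have hsum : ∑ k, l k * ε k ≤ ∑ k, l k * KL (p k) πl :=
    sum_le_sum fun k _ => mul_le_mul_of_nonneg_left (hε_le k) (hl k)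
  linarith

/-- The JSD gap lower bound: for any π_λ ∈ Fam,
`D(p_λ ‖ π_λ) ≥ ∑_k λ_k ε_k − JSD^λ(p_1,…,p_n)` where `ε_k = inf_{π∈Fam} D(p_k ‖ π)`. -/
theorem jsd_gap_lower_bound
    {X : Type*} [Fintype X] {n : ℕ}
    (p : Fin n → X → ℝ) (hp : ∀ k, IsPMF (p k))
    (l : Fin n → ℝ) (hl : ∀ k, 0 ≤ l k) (hl1 : ∑ k, l k = 1)
    (Fam : Set (X → ℝ)) (hFamne : Fam.Nonempty)
    (hFam : ∀ π ∈ Fam, IsPMF π ∧ ∀ x, (∃ k, 0 < p k x) → 0 < π x)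
    (ε : Fin n → ℝ) (hε : ∀ k, ε k = sInf ((fun π => KL (p k) π) '' Fam))
    (πl : X → ℝ) (hπl : πl ∈ Fam) :
    ∑ k, l k * ε k
        - ∑ k, l k * KL (p k) (fun x => ∑ j, l j * p j x)
      ≤ KL (fun x => ∑ k, l k * p k x) πl :=
  jsd_gap_lower_bound_general p hp l hl Fam hFam ε hε πl hπl
end

section
/- Capacity lower bound for static gating with disjoint supports: suppose p_1,...,p_n and π_1,...,π_n are probability distributions on a finite set X such that the supports of the π_k are pairwise disjoint, each p_k is supported on the support of π_k, and D_KL(p_k ‖ π_k) = ε_k. Then for any weight vector w in the simplex, the static mixture π_w = ∑_k w_k π_k satisfies max_k D_KL(p_k ‖ π_w) ≥ log(∑_{j=1}^n e^{ε_j}). -/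
open Finset

/-- Extended-real-valued Kullback-Leibler divergence: `⊤` when absolute continuity
fails, with the convention 0·log 0 = 0. -/
noncomputable def KLe {X : Type*} [Fintype X] (p q : X → ℝ) : EReal :=
  ∑ x, if p x = 0 then (0 : EReal)
       else if q x = 0 then (⊤ : EReal)
       else ((p x * Real.log (p x / q x) : ℝ) : EReal)

/-!
On the support of `π_k` the mixture `π_w` is `w_k π_k`, so
`D(p_k ‖ π_w) = ε_k - log w_k` (and `⊤` if `w_k = 0`). Since `∑ w_k = 1 = ∑ e^{ε_k} / S` with
`S = ∑_j e^{ε_j}`, some `k` has `w_k ≤ e^{ε_k} / S`, i.e. `ε_k - log w_k ≥ log S`.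
-/

theorem EReal.coe_finset_sum {α : Type*} (s : Finset α) (f : α → ℝ) :
    ((∑ x ∈ s, f x : ℝ) : EReal) = ∑ x ∈ s, (f x : EReal) :=
  map_sum (⟨⟨Real.toEReal, EReal.coe_zero⟩, EReal.coe_add⟩ : ℝ →+ EReal) f s

theorem EReal.sum_ne_bot {α : Type*} {s : Finset α} {f : α → EReal} (h : ∀ x ∈ s, f x ≠ ⊥) :
    ∑ x ∈ s, f x ≠ ⊥ :=
  Finset.sum_induction f (· ≠ ⊥) (fun _ _ ha hb => EReal.add_ne_bot_iff.mpr ⟨ha, hb⟩)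
    EReal.zero_ne_bot h

theorem EReal.sum_eq_top_of_mem {α : Type*} {s : Finset α} {f : α → EReal}
    (h : ∀ x ∈ s, f x ≠ ⊥) {a : α} (ha : a ∈ s) (hfa : f a = ⊤) : ∑ x ∈ s, f x = ⊤ := by
  classical
  rw [← Finset.sum_erase_add s f ha, hfa]
  exact EReal.add_top_of_ne_bot (EReal.sum_ne_bot fun x hx => h x (mem_of_mem_erase hx))

section KL

variable {X : Type*} [Fintype X]

theorem KLe_congr_right {p q q' : X → ℝ} (h : ∀ x, p x ≠ 0 → q x = q' x) :
    KLe p q = KLe p q' := by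
  refine sum_congr rfl fun x _ => ?_
  by_cases hpx : p x = 0
  · simp only [hpx, if_true]
  · rw [h x hpx]

theorem KLe_eq_top {p q : X → ℝ} {x : X} (hp : p x ≠ 0) (hq : q x = 0) : KLe p q = ⊤ := by
  refine EReal.sum_eq_top_of_mem (fun y _ => ?_) (mem_univ x) (by simp [hp, hq])
  split_ifs
  exacts [EReal.zero_ne_bot, top_ne_bot, EReal.coe_ne_bot _]

theorem KLe_eq_KL {p q : X → ℝ} (h : ∀ x, p x ≠ 0 → q x ≠ 0) : KLe p q = KL p q := by
  rw [KL, EReal.coe_finset_sum]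
  refine sum_congr rfl fun x _ => ?_
  by_cases hpx : p x = 0
  · simp [hpx]
  · rw [if_neg hpx, if_neg (h x hpx)]

theorem KL_const_mul_right {p q : X → ℝ} (hp : ∑ x, p x = 1) (h : ∀ x, p x ≠ 0 → q x ≠ 0)
    {c : ℝ} (hc : c ≠ 0) : KL p (fun x => c * q x) = KL p q - Real.log c := by
  have hterm : ∀ x, p x * Real.log (p x / (c * q x))
      = p x * Real.log (p x / q x) - p x * Real.log c := by
    intro x
    by_cases hpx : p x = 0
    · simp [hpx]
    · rw [div_mul_eq_div_div_swap, Real.log_div (div_ne_zero hpx (h x hpx)) hc, mul_sub]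
  simp only [KL, hterm, sum_sub_distrib, ← sum_mul, hp, one_mul]

end KL

theorem mixture_eq_of_pairwise_disjoint {ι X : Type*} [Fintype ι] (π : ι → X → ℝ) (w : ι → ℝ)
    (hdisj : ∀ k j, k ≠ j → ∀ x, π k x = 0 ∨ π j x = 0) {k : ι} {x : X} (hx : π k x ≠ 0) :
    ∑ j, w j * π j x = w k * π k x := by
  refine sum_eq_single k (fun j _ hj => ?_) (fun h => (h (mem_univ k)).elim)
  rw [(hdisj j k hj x).resolve_right hx, mul_zero]

theorem exists_mul_sum_exp_le_exp {ι : Type*} [Fintype ι] (w ε : ι → ℝ) (hw : ∑ k, w k = 1) :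
    ∃ k, w k * ∑ j, Real.exp (ε j) ≤ Real.exp (ε k) := by
  obtain ⟨k₀, hk₀, -⟩ := exists_ne_zero_of_sum_ne_zero (hw.trans_ne one_ne_zero)
  obtain ⟨k, -, hk⟩ := exists_le_of_sum_le ⟨k₀, hk₀⟩ (f := fun k => w k * ∑ j, Real.exp (ε j))
    (g := fun k => Real.exp (ε k))
    (by rw [← sum_mul, hw, one_mul])
  exact ⟨k, hk⟩

theorem static_gating_capacity_lower_bound_general
    {X : Type*} [Fintype X] {n : ℕ} (hn : 0 < n)
    (p π : Fin n → X → ℝ)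
    (hp : ∀ k, IsPMF (p k))
    (hdisj : ∀ k j, k ≠ j → ∀ x, π k x = 0 ∨ π j x = 0)
    (hsupp : ∀ k x, 0 < p k x → 0 < π k x)
    (ε : Fin n → ℝ) (hε : ∀ k, ε k = KL (p k) (π k))
    (w : Fin n → ℝ) (hw : ∀ k, 0 ≤ w k) (hw1 : ∑ k, w k = 1) :
    ((Real.log (∑ j, Real.exp (ε j)) : ℝ) : EReal)
      ≤ Finset.univ.sup' (Finset.univ_nonempty_iff.mpr (Fin.pos_iff_nonempty.mp hn))
          (fun k => KLe (p k) (fun x => ∑ j, w j * π j x)) := by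
  obtain ⟨k, hk⟩ := exists_mul_sum_exp_le_exp w ε hw1
  have hsupp' : ∀ x, p k x ≠ 0 → π k x ≠ 0 := fun x hx =>
    (hsupp k x (((hp k).1 x).lt_of_ne' hx)).ne'
  refine le_trans ?_ (le_sup' _ (mem_univ k))
  rw [KLe_congr_right fun x hx => mixture_eq_of_pairwise_disjoint π w hdisj (hsupp' x hx)]
  rcases (hw k).eq_or_lt with hwk | hwk
  · obtain ⟨x, -, hx⟩ := exists_ne_zero_of_sum_ne_zero ((hp k).2.trans_ne one_ne_zero)
    rw [KLe_eq_top hx (by rw [← hwk, zero_mul])]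
    exact le_top
  · rw [KLe_eq_KL fun x hx => mul_ne_zero hwk.ne' (hsupp' x hx),
      KL_const_mul_right (hp k).2 hsupp' hwk.ne', ← hε, EReal.coe_le_coe_iff]
    have hS : 0 < ∑ j, Real.exp (ε j) := sum_pos (fun j _ => Real.exp_pos _) ⟨k, mem_univ k⟩
    have hlog := Real.log_le_log (mul_pos hwk hS) hk
    rw [Real.log_mul hwk.ne' hS.ne', Real.log_exp] at hlog
    linarith

/-- Capacity lower bound for static gating with disjoint supports: the worst-case KL
divergence of any static mixture is at least `log (∑_j e^{ε_j})`. -/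
theorem static_gating_capacity_lower_bound
    {X : Type*} [Fintype X] {n : ℕ} (hn : 0 < n)
    (p π : Fin n → X → ℝ)
    (hp : ∀ k, IsPMF (p k)) (hπ : ∀ k, IsPMF (π k))
    (hdisj : ∀ k j, k ≠ j → ∀ x, π k x = 0 ∨ π j x = 0)
    (hsupp : ∀ k x, 0 < p k x → 0 < π k x)
    (ε : Fin n → ℝ) (hε : ∀ k, ε k = KL (p k) (π k))
    (w : Fin n → ℝ) (hw : ∀ k, 0 ≤ w k) (hw1 : ∑ k, w k = 1) :
    ((Real.log (∑ j, Real.exp (ε j)) : ℝ) : EReal)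
      ≤ Finset.univ.sup' (Finset.univ_nonempty_iff.mpr (Fin.pos_iff_nonempty.mp hn))
          (fun k => KLe (p k) (fun x => ∑ j, w j * π j x)) :=
  static_gating_capacity_lower_bound_general hn p π hp hdisj hsupp ε hε w hw hw1
end
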